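/- Proposition 1, third case. Let M ≥ 1, N ≥ 2 and let μ, ν be integers with M+1 ≤ μ < ν ≤ M+N. Write Q = Π_{j=μ}^{ν−2} (w_j − q w_{j+1}')(q w_j' − w_{j+1}). Then, with respect to the pairs (w_μ, w_μ'), …, (w_{ν−1}, w_{ν−1}'), all carrying the fermionic exchange factor H^f, and with w_{μ−1}, w_ν further free variables, the weak equality (w_μ − q w_{μ−1}) · Q · (w_ν − q w_{ν−1}') ∼ (q w_μ' − w_{μ−1}) · Q · (q w_ν − w_{ν−1}) holds. -/

import Mathlib

/-- Bosonic exchange factor `H^b(u,v) = -(q²v - u)/(q²u - v)`. -/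
noncomputable def Hb (q u v : ℂ) : ℂ := -(q ^ 2 * v - u) / (q ^ 2 * u - v)

/-- Fermionic exchange factor `H^f(u,v) = -(q²u - v)/(q²v - u)`. -/
noncomputable def Hf (q u v : ℂ) : ℂ := -(q ^ 2 * u - v) / (q ^ 2 * v - u)

/-- Exchange factor assignment for `U_q(sl^(M|N))`: bosonic for `j < M`,
the constant `-1` for `j = M`, fermionic for `j > M`. -/
noncomputable def Hex (M : ℕ) (q : ℂ) (j : ℕ) : ℂ → ℂ → ℂ :=
  if j < M then Hb q else if j = M then fun _ _ => -1 else Hf q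

/-- Interchange `w_j` and `w_j'` for every `j ∈ σ`. -/
def swapOn (σ : Finset ℕ) (w w' : ℕ → ℂ) : ℕ → ℂ := fun j => if j ∈ σ then w' j else w j

/-- Weak equality `F ∼ G` with respect to the pairs `(w_j, w_j')`, `j ∈ J`,
carrying exchange factors `H j`. -/
def WeakEq (J : Finset ℕ) (H : ℕ → ℂ → ℂ → ℂ) (w w' : ℕ → ℂ)
    (F G : (ℕ → ℂ) → (ℕ → ℂ) → ℂ) : Prop :=
  ∑ σ ∈ J.powerset, (∏ j ∈ σ, H j (w' j) (w j)) * F (swapOn σ w w') (swapOn σ w' w)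
    = ∑ σ ∈ J.powerset, (∏ j ∈ σ, H j (w' j) (w j)) * G (swapOn σ w w') (swapOn σ w' w)

/-- `Q = Π_{j=μ}^{ν−2} (w_j − q w_{j+1}')(q w_j' − w_{j+1})`. -/
noncomputable def Qfer (q : ℂ) (μ ν : ℕ) (u u' : ℕ → ℂ) : ℂ :=
  ∏ j ∈ Finset.Ico μ (ν - 1), (u j - q * u' (j + 1)) * (q * u' j - u (j + 1))

/-! For a chain of pairs `(w_μ, w_μ'), …, (w_m, w_m')` consider
`(b (w_m, w_m') (w_μ − q² w_μ') − a (w_m − q² w_m') − c (w_μ w_m' − w_μ' w_m)) · Q` with `b`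
symmetric. Summing it over both orders of the last pair `(z, v) = (w_m, w_m')`, weighted by `H^f`,
gives `(z − v)/(q² z − v)` times an expression of the same shape for the chain ending at `m − 1`,
again with a symmetric `b`. For a single pair the expression is `(b − a)(w_μ − q² w_μ')`, which
the `H^f`-symmetrization annihilates. The difference of the two sides of the proposition has this
shape, with `a = w_{μ−1}`, `b = w_ν` and `c = q`. -/

open Finset

noncomputable def weakSum (J : Finset ℕ) (H : ℕ → ℂ → ℂ → ℂ) (w w' : ℕ → ℂ)
    (F : (ℕ → ℂ) → (ℕ → ℂ) → ℂ) : ℂ :=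
  ∑ σ ∈ J.powerset, (∏ j ∈ σ, H j (w' j) (w j)) * F (swapOn σ w w') (swapOn σ w' w)

lemma swapOn_empty (w w' : ℕ → ℂ) : swapOn ∅ w w' = w := by
  funext j; simp [swapOn]

lemma swapOn_of_notMem {σ : Finset ℕ} {j : ℕ} (hj : j ∉ σ) (w w' : ℕ → ℂ) :
    swapOn σ w w' j = w j := by
  simp [swapOn, hj]

lemma swapOn_singleton_swapOn {τ : Finset ℕ} {k : ℕ} (hk : k ∉ τ) (w w' : ℕ → ℂ) :
    swapOn {k} (swapOn τ w w') (swapOn τ w' w) = swapOn (insert k τ) w w' := by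
  funext j
  by_cases hj : j = k
  · subst hj; simp [swapOn, hk]
  · simp [swapOn, hj]

section WeakSum

variable {J : Finset ℕ} {H : ℕ → ℂ → ℂ → ℂ} {w w' : ℕ → ℂ}

lemma weakEq_iff_weakSum_sub_eq_zero {F G : (ℕ → ℂ) → (ℕ → ℂ) → ℂ} :
    WeakEq J H w w' F G ↔ weakSum J H w w' (fun u u' => F u u' - G u u') = 0 := by
  simp only [WeakEq, weakSum, mul_sub, sum_sub_distrib, sub_eq_zero]

lemma weakSum_empty (F : (ℕ → ℂ) → (ℕ → ℂ) → ℂ) : weakSum ∅ H w w' F = F w w' := by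
  simp [weakSum, swapOn_empty]

lemma weakSum_congr {F G : (ℕ → ℂ) → (ℕ → ℂ) → ℂ}
    (h : ∀ τ ⊆ J, F (swapOn τ w w') (swapOn τ w' w) = G (swapOn τ w w') (swapOn τ w' w)) :
    weakSum J H w w' F = weakSum J H w w' G :=
  sum_congr rfl fun τ hτ => by rw [h τ (mem_powerset.mp hτ)]

lemma weakSum_const_mul (c : ℂ) (F : (ℕ → ℂ) → (ℕ → ℂ) → ℂ) :
    weakSum J H w w' (fun u u' => c * F u u') = c * weakSum J H w w' F := by
  simp only [weakSum, mul_sum, mul_left_comm]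

lemma weakSum_insert {k : ℕ} (hk : k ∉ J) (F : (ℕ → ℂ) → (ℕ → ℂ) → ℂ) :
    weakSum (insert k J) H w w' F = weakSum J H w w'
      (fun u u' => F u u' + H k (w' k) (w k) * F (swapOn {k} u u') (swapOn {k} u' u)) := by
  rw [weakSum, sum_powerset_insert hk, ← sum_add_distrib]
  refine sum_congr rfl fun τ hτ => ?_
  have hkτ : k ∉ τ := fun h => hk (mem_powerset.mp hτ h)
  rw [prod_insert hkτ, ← swapOn_singleton_swapOn hkτ, ← swapOn_singleton_swapOn hkτ]
  ring

end WeakSum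

lemma add_Hf_mul_swap_eq_zero {q x y : ℂ} (hxy : q ^ 2 * x - y ≠ 0) (s : ℂ) :
    (x - q ^ 2 * y) * s + Hf q y x * ((y - q ^ 2 * x) * s) = 0 := by
  unfold Hf
  rw [div_mul_eq_mul_div, add_div' _ _ _ hxy, div_eq_zero_iff]
  exact Or.inl (by ring)

lemma Hf_link_transport {q z v : ℂ} (hzv : q ^ 2 * z - v ≠ 0) (s s' x y a b c : ℂ) :
    (x - q * v) * (q * y - z) * (b * (s - q ^ 2 * s') - a * (z - q ^ 2 * v)
        - c * (s * v - s' * z))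
      + Hf q v z * ((x - q * z) * (q * y - v) * (b * (s - q ^ 2 * s')
        - a * (v - q ^ 2 * z) - c * (s * z - s' * v)))
    = (z - v) / (q ^ 2 * z - v) *
        ((b * (q * (1 + q ^ 2) * (x * y + z * v) - q ^ 2 * (x + y) * (z + v))
            + c * ((1 + q ^ 2) * (z * v) * (x + y) - q * (z * v + x * y) * (z + v)))
            * (s - q ^ 2 * s')
          - a * ((z - q ^ 2 * v) * (v - q ^ 2 * z)) * (x - q ^ 2 * y)
          - c * ((z - q ^ 2 * v) * (v - q ^ 2 * z)) * (s * y - s' * x)) := by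
  unfold Hf
  field_simp
  ring

lemma Qfer_succ {q : ℂ} {μ m : ℕ} (hm : μ ≤ m) (u u' : ℕ → ℂ) :
    Qfer q μ (m + 2) u u'
      = Qfer q μ (m + 1) u u' * ((u m - q * u' (m + 1)) * (q * u' m - u (m + 1))) :=
  prod_Ico_succ_top hm _

lemma Qfer_swapOn_singleton {q : ℂ} {μ ν k : ℕ} (hk : ν ≤ k) (u u' : ℕ → ℂ) :
    Qfer q μ ν (swapOn {k} u u') (swapOn {k} u' u) = Qfer q μ ν u u' := by
  refine prod_congr rfl fun j hj => ?_
  have hjk : j + 1 < k := by have := mem_Ico.mp hj; omega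
  simp [swapOn, show j ≠ k by omega, show j + 1 ≠ k by omega]

noncomputable def boundaryForm (q : ℂ) (μ m : ℕ) (a c : ℂ) (b : ℂ → ℂ → ℂ) (u u' : ℕ → ℂ) :
    ℂ :=
  b (u m) (u' m) * (u μ - q ^ 2 * u' μ) - a * (u m - q ^ 2 * u' m)
    - c * (u μ * u' m - u' μ * u m)

/-- The coefficient `b` after summing out the pair `(z, v)`; see `Hf_link_transport`. -/
noncomputable def transportedCoeff (q z v c : ℂ) (b : ℂ → ℂ → ℂ) : ℂ → ℂ → ℂ :=
  fun x y => b z v * (q * (1 + q ^ 2) * (x * y + z * v) - q ^ 2 * (x + y) * (z + v))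
    + c * ((1 + q ^ 2) * (z * v) * (x + y) - q * (z * v + x * y) * (z + v))

lemma transportedCoeff_comm (q z v c : ℂ) (b : ℂ → ℂ → ℂ) (x y : ℂ) :
    transportedCoeff q z v c b x y = transportedCoeff q z v c b y x := by
  unfold transportedCoeff; ring

section Chain

variable {q : ℂ} {μ m : ℕ}

lemma boundaryForm_mul_Qfer_add_Hf_mul_swap (hm : μ ≤ m) {z v : ℂ} (hzv : q ^ 2 * z - v ≠ 0)
    (a c : ℂ) {b : ℂ → ℂ → ℂ} (hb : ∀ x y, b x y = b y x) {u u' : ℕ → ℂ}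
    (hz : u (m + 1) = z) (hv : u' (m + 1) = v) :
    boundaryForm q μ (m + 1) a c b u u' * Qfer q μ (m + 2) u u'
      + Hf q v z * (boundaryForm q μ (m + 1) a c b (swapOn {m + 1} u u') (swapOn {m + 1} u' u)
        * Qfer q μ (m + 2) (swapOn {m + 1} u u') (swapOn {m + 1} u' u))
    = (z - v) / (q ^ 2 * z - v) *
        (boundaryForm q μ m (a * ((z - q ^ 2 * v) * (v - q ^ 2 * z)))
            (c * ((z - q ^ 2 * v) * (v - q ^ 2 * z))) (transportedCoeff q z v c b) u u'
          * Qfer q μ (m + 1) u u') := by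
  have hμ : μ ≠ m + 1 := by omega
  have hm' : m ≠ m + 1 := by omega
  rw [Qfer_succ hm, Qfer_succ hm, Qfer_swapOn_singleton le_rfl]
  simp only [boundaryForm, transportedCoeff, swapOn, mem_singleton, hμ, hm', if_true,
    if_false, hz, hv, hb v z]
  linear_combination Qfer q μ (m + 1) u u' *
    Hf_link_transport hzv (u μ) (u' μ) (u m) (u' m) a (b z v) c

lemma weakSum_boundaryForm_mul_Qfer_eq_zero (hm : μ ≤ m) {w w' : ℕ → ℂ}
    (hden : ∀ j ∈ Icc μ m, q ^ 2 * w j ≠ w' j) (a c : ℂ) {b : ℂ → ℂ → ℂ}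
    (hb : ∀ x y, b x y = b y x) :
    weakSum (Ico μ (m + 1)) (fun _ => Hf q) w w'
      (fun u u' => boundaryForm q μ m a c b u u' * Qfer q μ (m + 1) u u') = 0 := by
  induction m, hm using Nat.le_induction generalizing a c b with
  | base =>
    have hzv : q ^ 2 * w μ - w' μ ≠ 0 := sub_ne_zero_of_ne (hden μ (by simp))
    rw [Nat.Ico_succ_singleton, ← insert_empty_eq, weakSum_insert (notMem_empty μ),
      weakSum_empty]
    simp only [boundaryForm, Qfer, Nat.add_sub_cancel, Ico_self, prod_empty, swapOn,
      mem_singleton, if_true, hb (w' μ) (w μ)]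
    linear_combination add_Hf_mul_swap_eq_zero hzv (b (w μ) (w' μ) - a)
  | succ m hm ih =>
    have hzv : q ^ 2 * w (m + 1) - w' (m + 1) ≠ 0 :=
      sub_ne_zero_of_ne (hden (m + 1) (mem_Icc.mpr ⟨by omega, le_rfl⟩))
    rw [Nat.Ico_succ_right_eq_insert_Ico (by omega), weakSum_insert (by simp)]
    rw [weakSum_congr (G := fun u u' => _ * (boundaryForm q μ m _ _
      (transportedCoeff q (w (m + 1)) (w' (m + 1)) c b) u u' * Qfer q μ (m + 1) u u'))
      fun τ hτ => boundaryForm_mul_Qfer_add_Hf_mul_swap hm hzv a c hb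
        (swapOn_of_notMem (fun h => by simpa using hτ h) w w')
        (swapOn_of_notMem (fun h => by simpa using hτ h) w' w)]
    rw [weakSum_const_mul, ih (fun j hj => hden j (by simp at hj ⊢; omega)) _ _
      (transportedCoeff_comm q _ _ c b), mul_zero]

end Chain

theorem proposition1_third_general (M : ℕ)
    (μ ν : ℕ) (hμ1 : M + 1 ≤ μ) (hμν : μ < ν)
    (q : ℂ) (w w' : ℕ → ℂ)
    (hden : ∀ j ∈ Finset.Ico μ ν, q ^ 2 * w j ≠ w' j) :
    WeakEq (Finset.Ico μ ν) (fun _ => Hf q) w w'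
      (fun u u' => (u μ - q * u (μ - 1)) * Qfer q μ ν u u' * (u ν - q * u' (ν - 1)))
      (fun u u' => (q * u' μ - u (μ - 1)) * Qfer q μ ν u u' * (q * u ν - u (ν - 1))) := by
  obtain ⟨m, rfl⟩ : ∃ m, ν = m + 1 := ⟨ν - 1, by omega⟩
  have hchain := weakSum_boundaryForm_mul_Qfer_eq_zero (q := q) (by omega : μ ≤ m)
    (fun j hj => hden j (by simp at hj ⊢; omega)) (w (μ - 1)) q (b := fun _ _ => w (m + 1))
    fun _ _ => rfl
  rw [weakEq_iff_weakSum_sub_eq_zero, ← hchain]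
  refine weakSum_congr fun τ hτ => ?_
  have hμτ : μ - 1 ∉ τ := fun h => by have := mem_Ico.mp (hτ h); omega
  have hντ : m + 1 ∉ τ := fun h => by have := mem_Ico.mp (hτ h); omega
  simp only [boundaryForm, Nat.add_sub_cancel, swapOn_of_notMem hμτ, swapOn_of_notMem hντ]
  ring

/-- Proposition 1, third case: for `M+1 ≤ μ < ν ≤ M+N`,
`(w_μ − q w_{μ−1}) Q (w_ν − q w_{ν−1}') ∼ (q w_μ' − w_{μ−1}) Q (q w_ν − w_{ν−1})`
with respect to the fermionic pairs `(w_μ, w_μ'), …, (w_{ν−1}, w_{ν−1}')`. -/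
theorem proposition1_third (M N : ℕ) (hM : 1 ≤ M) (hN : 2 ≤ N)
    (μ ν : ℕ) (hμ1 : M + 1 ≤ μ) (hμν : μ < ν) (hν : ν ≤ M + N)
    (q : ℂ) (hq : q ≠ 0) (hq2 : q ^ 2 ≠ 1) (w w' : ℕ → ℂ)
    (hden : ∀ j ∈ Finset.Ico μ ν, q ^ 2 * w j ≠ w' j) :
    WeakEq (Finset.Ico μ ν) (fun _ => Hf q) w w'
      (fun u u' => (u μ - q * u (μ - 1)) * Qfer q μ ν u u' * (u ν - q * u' (ν - 1)))
      (fun u u' => (q * u' μ - u (μ - 1)) * Qfer q μ ν u u' * (q * u ν - u (ν - 1))) :=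
  proposition1_third_general M μ ν hμ1 hμν q w w' hden
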